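/- Constant recurrence coefficients: for the parameter choice (a,b;c,d) = (4/3, 5/3; 2, 5/2), the recurrence coefficients are constant in n: β_n = 4/9, α_{n+1} = 16/243 and γ_{n+1} = 64/19683 for all n ∈ ℕ; consequently, with P_{−1} = P_{−2} = 0 and P_0 = 1, the polynomials P_n(x) := P_n(x; 4/3, 5/3; 2, 5/2) satisfy, for every n ∈ ℕ and all x, the constant-coefficient third-order recurrence P_{n+1}(x) = (x − 4/9) P_n(x) − (16/243) P_{n−1}(x) − (64/19683) P_{n−2}(x). -/

import Mathlib

/-- Pochhammer symbol `(z)_n = z (z+1) ⋯ (z+n-1)`. -/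
noncomputable def poch (z : ℝ) (n : ℕ) : ℝ := ∏ i ∈ Finset.range n, (z + i)

/-- The auxiliary parameters `c'_m` (for integers `m ≥ -1`): `c'_{2k-1} = c + k` and
`c'_{2k} = d + k`. -/
noncomputable def cp (c d : ℝ) (m : ℤ) : ℝ :=
  if m % 2 = 0 then d + (m / 2 : ℤ) else c + ((m + 1) / 2 : ℤ)

/-- The recurrence coefficient `β_n`. -/
noncomputable def betaC (a b c d : ℝ) (n : ℕ) : ℝ :=
  ((n : ℝ) + 1) * (a + n) * (b + n) /
      ((cp c d ((n : ℤ) - 1) + n) * (cp c d (n : ℤ) + n)) -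
    (n : ℝ) * (a + n - 1) * (b + n - 1) /
      ((cp c d ((n : ℤ) - 1) + n - 1) * (cp c d (n : ℤ) + n - 2))

/-- The recurrence coefficient `α_{n+1}`. -/
noncomputable def alphaC (a b c d : ℝ) (n : ℕ) : ℝ :=
  (((n : ℝ) + 1) * (a + n) * (b + n) /
      ((cp c d ((n : ℤ) - 1) + n) * (cp c d (n : ℤ) + n))) *
    ((n : ℝ) * (a + n - 1) * (b + n - 1) /
        (2 * (cp c d ((n : ℤ) - 1) + n - 1) * (cp c d (n : ℤ) + n - 1)) -
      ((n : ℝ) + 1) * (a + n) * (b + n) /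
        ((cp c d ((n : ℤ) - 1) + n) * (cp c d (n : ℤ) + n)) +
      ((n : ℝ) + 2) * (a + n + 1) * (b + n + 1) /
        (2 * (cp c d ((n : ℤ) - 1) + n + 1) * (cp c d (n : ℤ) + n + 1)))

/-- The recurrence coefficient `γ_{n+1}`. -/
noncomputable def gammaC (a b c d : ℝ) (n : ℕ) : ℝ :=
  (poch ((n : ℝ) + 1) 2 * poch (a + n) 2 * poch (b + n) 2 *
      (cp c d (n : ℤ) - 1) * (cp c d (n : ℤ) - a) * (cp c d (n : ℤ) - b)) /
    (poch (cp c d ((n : ℤ) - 1) + n) 3 * poch (cp c d (n : ℤ) + n) 3 *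
      poch (cp c d (n : ℤ) + n - 1) 3)

/-- The type II multiple orthogonal polynomial of degree `n` on the step line. -/
noncomputable def P (a b c d : ℝ) (n : ℕ) (x : ℝ) : ℝ :=
  ∑ j ∈ Finset.range (n + 1),
    (n.choose j : ℝ) * (-1 : ℝ) ^ j *
      (poch (a + n - j) j * poch (b + n - j) j) /
      (poch (c + (n / 2 : ℕ) + n - j) j * poch (d + ((n - 1) / 2 : ℕ) + n - j) j) *
      x ^ (n - j)

/-- The polynomials `P_m` extended to integer indices by the convention
`P_m = 0` for `m < 0`. -/
noncomputable def Pz (a b c d : ℝ) (m : ℤ) (x : ℝ) : ℝ :=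
  if 0 ≤ m then P a b c d m.toNat x else 0

/-!
For `d = c + 1/2` the auxiliary parameters are affine, `c'_m = c + (m + 1)/2`, so for `c = 2` the
coefficients `β_n`, `α_{n+1}`, `γ_{n+1}` are rational functions of `n` which collapse to constants.

For the polynomials, Gauss' duplication and triplication formulas for Pochhammer symbols turn the
coefficient of `x^(n-j)` in `P_n` into `(-4/27)^j C(3n-2j+2, j)`. Hence `P_n(x) = s^n R_n(x/s)` with
`s = -4/27` and `R_n(y) = ∑_i C(n+2i+2, 3i+2) y^i`. As `4/9, 16/243, 64/19683` are `-3s, 3s², -s³`,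
the claimed recurrence becomes `R_{n+3} = (y + 3) R_{n+2} - 3 R_{n+1} + R_n`, and coefficientwise
this says that the third difference of `C(M, r + 3)` in the upper index `M` is `C(M, r)`.
-/

open Finset
open scoped Nat

lemma poch_succ (z : ℝ) (j : ℕ) : poch z (j + 1) = poch z j * (z + j) := prod_range_succ _ _

lemma poch_add (z : ℝ) (i j : ℕ) : poch z (i + j) = poch z i * poch (z + i) j := by
  simp only [poch, prod_range_add, Nat.cast_add, add_assoc]

lemma poch_pos {z : ℝ} (hz : 0 < z) (j : ℕ) : 0 < poch z j :=
  prod_pos fun i _ => by positivity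

lemma poch_natCast_add_one (m j : ℕ) : poch ((m : ℝ) + 1) j = j ! * (m + j).choose j := by
  have h := Nat.ascFactorial_eq_prod_range (m + 1) j
  rw [Nat.ascFactorial_eq_factorial_mul_choose] at h
  unfold poch
  exact_mod_cast h.symm

lemma poch_duplication (z : ℝ) (j : ℕ) :
    4 ^ j * (poch z j * poch (z + 1 / 2) j) = poch (2 * z) (2 * j) := by
  induction j with
  | zero => simp [poch]
  | succ j ih =>
    rw [show 2 * (j + 1) = 2 * j + 1 + 1 by ring, poch_succ, poch_succ, poch_succ, poch_succ, ← ih]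
    push_cast
    ring

lemma poch_triplication (z : ℝ) (j : ℕ) :
    27 ^ j * (poch z j * poch (z + 1 / 3) j * poch (z + 2 / 3) j) = poch (3 * z) (3 * j) := by
  induction j with
  | zero => simp [poch]
  | succ j ih =>
    rw [show 3 * (j + 1) = 3 * j + 1 + 1 + 1 by ring, poch_succ, poch_succ, poch_succ, poch_succ,
      poch_succ, poch_succ, ← ih]
    push_cast
    ring

lemma cp_eq_of_eq_add_half {c d : ℝ} (hcd : d = c + 1 / 2) (m : ℤ) :
    cp c d m = c + (m + 1) / 2 := by
  obtain ⟨k, rfl | rfl⟩ := Int.even_or_odd' m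
  · rw [cp, if_pos (by omega), show 2 * k / 2 = k by omega, hcd]
    push_cast
    ring
  · rw [cp, if_neg (by omega), show (2 * k + 1 + 1) / 2 = k + 1 by omega]
    push_cast
    ring

lemma cp_two_five_halves (m : ℤ) : cp 2 (5 / 2) m = (m + 5) / 2 := by
  rw [cp_eq_of_eq_add_half (by norm_num)]
  ring

lemma betaC_eq (n : ℕ) : betaC (4 / 3) (5 / 3) 2 (5 / 2) n = 4 / 9 := by
  simp only [betaC, cp_two_five_halves]
  push_cast
  ring_nf
  field_simp
  ring

lemma alphaC_eq (n : ℕ) : alphaC (4 / 3) (5 / 3) 2 (5 / 2) n = 16 / 243 := by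
  simp only [alphaC, cp_two_five_halves]
  push_cast
  ring_nf
  field_simp
  ring

lemma gammaC_eq (n : ℕ) : gammaC (4 / 3) (5 / 3) 2 (5 / 2) n = 64 / 19683 := by
  simp only [gammaC, cp_two_five_halves, poch, prod_range_succ, prod_range_zero]
  push_cast
  ring_nf
  field_simp
  ring

lemma poch_duplication_of_floor {c d : ℝ} (hcd : d = c + 1 / 2) {n : ℕ} (hn : 0 < n)
    (t : ℝ) (j : ℕ) :
    4 ^ j * (poch (c + (n / 2 : ℕ) + t) j * poch (d + ((n - 1) / 2 : ℕ) + t) j) =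
      poch (2 * c + n - 1 + 2 * t) (2 * j) := by
  subst hcd
  obtain ⟨k, rfl | rfl⟩ := n.even_or_odd'
  · obtain ⟨k, rfl⟩ : ∃ l, k = l + 1 := Nat.exists_eq_add_of_le' (by omega)
    rw [show 2 * (k + 1) / 2 = k + 1 by omega, show (2 * (k + 1) - 1) / 2 = k by omega,
      show 2 * c + ↑(2 * (k + 1)) - 1 + 2 * t = 2 * (c + 1 / 2 + k + t) by push_cast; ring,
      ← poch_duplication, mul_comm (poch _ j),
      show c + 1 / 2 + ↑k + t + 1 / 2 = c + ↑(k + 1) + t by push_cast; ring]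
  · rw [show (2 * k + 1) / 2 = k by omega, show (2 * k + 1 - 1) / 2 = k by omega,
      show 2 * c + ↑(2 * k + 1) - 1 + 2 * t = 2 * (c + k + t) by push_cast; ring,
      ← poch_duplication, add_right_comm c (1 / 2), add_right_comm (c + k)]

lemma choose_mul_poch_div_poch (m j : ℕ) :
    ((m + j).choose j : ℝ) * (poch (4 / 3 + ↑(m + j) - j) j * poch (5 / 3 + ↑(m + j) - j) j) /
        (poch (2 + ((m + j) / 2 : ℕ) + ↑(m + j) - j) j *
          poch (5 / 2 + ((m + j - 1) / 2 : ℕ) + ↑(m + j) - j) j) =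
      (4 / 27) ^ j * (3 * m + j + 2).choose j := by
  rcases Nat.eq_zero_or_pos j with rfl | hj
  · simp [poch]
  have hm : ((m + j : ℕ) : ℝ) - j = m := by push_cast; ring
  simp only [add_sub_assoc, hm]
  set D :=
    poch (2 + ((m + j) / 2 : ℕ) + (m : ℝ)) j * poch (5 / 2 + ((m + j - 1) / 2 : ℕ) + (m : ℝ)) j
  have hD : 4 ^ j * D = poch (3 * m + j + 3) (2 * j) := by
    rw [poch_duplication_of_floor (by norm_num) (by omega)]
    push_cast
    ring_nf
  have hN : 27 ^ j * (j ! * (m + j).choose j * (poch (4 / 3 + m) j * poch (5 / 3 + m) j)) =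
      j ! * (3 * m + j + 2).choose j * poch (3 * m + j + 3) (2 * j) := by
    have h3 := poch_triplication ((m : ℝ) + 1) j
    have h1 := poch_natCast_add_one (3 * m + 2) j
    rw [show 3 * j = j + 2 * j by ring, poch_add] at h3
    push_cast at h1
    rw [← poch_natCast_add_one, show 3 * m + j + 2 = 3 * m + 2 + j by ring, ← h1,
      show (4 / 3 : ℝ) + m = m + 1 + 1 / 3 by ring, show (5 / 3 : ℝ) + m = m + 1 + 2 / 3 by ring,
      ← mul_assoc (poch ((m : ℝ) + 1) j), h3]
    congr 2 <;> ring
  have hD0 : 0 < D := mul_pos (poch_pos (by positivity) j) (poch_pos (by positivity) j)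
  have hfact : (0 : ℝ) < j ! := by positivity
  rw [div_eq_iff hD0.ne', div_pow, div_mul_eq_mul_div, div_mul_eq_mul_div,
    eq_div_iff (by positivity)]
  refine mul_left_cancel₀ hfact.ne' ?_
  linear_combination hN - (j ! * ((3 * m + j + 2).choose j : ℝ)) * hD

lemma choose_third_difference (M r : ℕ) :
    (M + 3).choose (r + 3) + 3 * (M + 1).choose (r + 3) =
      M.choose r + 3 * (M + 2).choose (r + 3) + M.choose (r + 3) := by
  simp only [Nat.choose_succ_succ', add_assoc, Nat.reduceAdd]
  omega

lemma choose_two_third_difference (M : ℕ) :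
    (M + 3).choose 2 + 3 * (M + 1).choose 2 = 3 * (M + 2).choose 2 + M.choose 2 := by
  simp only [Nat.choose_succ_succ', add_assoc, Nat.reduceAdd, Nat.choose_zero_right]
  omega

noncomputable def binomPoly (n : ℕ) (y : ℝ) : ℝ :=
  ∑ i ∈ range (n + 1), ((n + 2 * i + 2).choose (3 * i + 2) : ℝ) * y ^ i

lemma binomPoly_eq_sum_range {n N : ℕ} (h : n < N) (y : ℝ) :
    binomPoly n y = ∑ i ∈ range N, ((n + 2 * i + 2).choose (3 * i + 2) : ℝ) * y ^ i := by
  refine sum_subset (range_subset_range.2 h) fun i _ hi => ?_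
  rw [Nat.choose_eq_zero_of_lt (by simp at hi; omega), Nat.cast_zero, zero_mul]

lemma binomPoly_add_three (n : ℕ) (y : ℝ) :
    binomPoly (n + 3) y =
      (y + 3) * binomPoly (n + 2) y - 3 * binomPoly (n + 1) y + binomPoly n y := by
  let f : ℕ → ℕ → ℝ := fun k i => ((k + 2 * i + 2).choose (3 * i + 2) : ℝ) * y ^ i
  have hB : ∀ k < n + 4, binomPoly k y = ∑ i ∈ range (n + 3), f k (i + 1) + f k 0 :=
    fun k hk => by rw [binomPoly_eq_sum_range hk, sum_range_succ']
  have hy : y * binomPoly (n + 2) y = ∑ i ∈ range (n + 3), y * f (n + 2) i := by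
    rw [binomPoly, mul_sum]
  have hf : ∀ i, f (n + 3) (i + 1) =
      y * f (n + 2) i + 3 * f (n + 2) (i + 1) - 3 * f (n + 1) (i + 1) + f n (i + 1) := fun i => by
    simp only [f]
    rw [show 3 * (i + 1) + 2 = 3 * i + 2 + 3 by ring,
      show n + 3 + 2 * (i + 1) + 2 = n + 2 * i + 4 + 3 by ring,
      show n + 2 + 2 * (i + 1) + 2 = n + 2 * i + 4 + 2 by ring,
      show n + 1 + 2 * (i + 1) + 2 = n + 2 * i + 4 + 1 by ring,
      show n + 2 * (i + 1) + 2 = n + 2 * i + 4 by ring,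
      show n + 2 + 2 * i + 2 = n + 2 * i + 4 by ring]
    have h := congrArg (Nat.cast : ℕ → ℝ) (choose_third_difference (n + 2 * i + 4) (3 * i + 2))
    push_cast at h
    linear_combination y ^ (i + 1) * h
  have hf0 : f (n + 3) 0 = 3 * f (n + 2) 0 - 3 * f (n + 1) 0 + f n 0 := by
    have h := congrArg (Nat.cast : ℕ → ℝ) (choose_two_third_difference (n + 2))
    push_cast at h
    simp only [f, mul_zero, add_zero, pow_zero, mul_one]
    rw [add_right_comm n 3, add_right_comm n 1]
    linear_combination h
  rw [add_mul, hy, hB (n + 3) (by omega), hB (n + 2) (by omega), hB (n + 1) (by omega),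
    hB n (by omega), sum_congr rfl fun i _ => hf i]
  simp only [sum_add_distrib, sum_sub_distrib, ← mul_sum]
  linear_combination hf0

lemma P_eq_pow_mul_binomPoly (n : ℕ) (x : ℝ) :
    P (4 / 3) (5 / 3) 2 (5 / 2) n x = (-4 / 27) ^ n * binomPoly n (x / (-4 / 27)) := by
  rw [P, binomPoly, mul_sum]
  conv_rhs => rw [← sum_range_reflect]
  refine sum_congr rfl fun j hj => ?_
  obtain ⟨m, rfl⟩ := Nat.exists_eq_add_of_le' (Nat.le_of_lt_succ (mem_range.1 hj))
  rw [show m + j + 1 - 1 - j = m by omega, show m + j - j = m by omega,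
    show m + j + 2 * m + 2 = 3 * m + 2 + j by ring, Nat.choose_symm_add,
    show 3 * m + 2 + j = 3 * m + j + 2 by ring]
  have hs : (-4 / 27 : ℝ) ^ j = (-1) ^ j * (4 / 27) ^ j := by rw [← mul_pow]; norm_num
  have hx : (-4 / 27 : ℝ) ^ (m + j) * (x / (-4 / 27)) ^ m = (-4 / 27) ^ j * x ^ m := by
    rw [pow_add, mul_right_comm, ← mul_pow, mul_div_cancel₀ _ (by norm_num), mul_comm]
  linear_combination (-1) ^ j * x ^ m * choose_mul_poch_div_poch m j -
    ((3 * m + j + 2).choose j : ℝ) * (x ^ m * hs + hx)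

lemma Pz_of_nonneg {a b c d : ℝ} {m : ℤ} (hm : 0 ≤ m) (x : ℝ) :
    Pz a b c d m x = P a b c d m.toNat x :=
  if_pos hm

lemma Pz_of_neg {a b c d : ℝ} {m : ℤ} (hm : m < 0) (x : ℝ) : Pz a b c d m x = 0 :=
  if_neg hm.not_ge

lemma P_succ (n : ℕ) (x : ℝ) :
    P (4 / 3) (5 / 3) 2 (5 / 2) (n + 1) x =
      (x - 4 / 9) * P (4 / 3) (5 / 3) 2 (5 / 2) n x -
        16 / 243 * Pz (4 / 3) (5 / 3) 2 (5 / 2) ((n : ℤ) - 1) x -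
        64 / 19683 * Pz (4 / 3) (5 / 3) 2 (5 / 2) ((n : ℤ) - 2) x := by
  match n with
  | 0 =>
    rw [Pz_of_neg (by norm_num), Pz_of_neg (by norm_num), P_eq_pow_mul_binomPoly,
      P_eq_pow_mul_binomPoly]
    norm_num [binomPoly, sum_range_succ, Nat.choose]
    ring
  | 1 =>
    rw [Pz_of_nonneg (by norm_num), Pz_of_neg (by norm_num), P_eq_pow_mul_binomPoly,
      P_eq_pow_mul_binomPoly, P_eq_pow_mul_binomPoly]
    norm_num [binomPoly, sum_range_succ, Nat.choose]
    ring
  | m + 2 =>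
    rw [Pz_of_nonneg (by omega), Pz_of_nonneg (by omega),
      show ((m + 2 : ℕ) - 1 : ℤ).toNat = m + 1 by omega,
      show ((m + 2 : ℕ) - 2 : ℤ).toNat = m by omega]
    simp only [P_eq_pow_mul_binomPoly, binomPoly_add_three]
    ring

/-- Constant recurrence coefficients for `(a,b;c,d) = (4/3, 5/3; 2, 5/2)`:
`β_n = 4/9`, `α_{n+1} = 16/243`, `γ_{n+1} = 64/19683` for all `n`, and consequently
(with `P_{−1} = P_{−2} = 0`, `P_0 = 1`) the polynomials satisfy the
constant-coefficient third-order recurrence. -/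
theorem constant_recurrence_coefficients :
    (∀ n : ℕ, betaC (4 / 3) (5 / 3) 2 (5 / 2) n = 4 / 9) ∧
    (∀ n : ℕ, alphaC (4 / 3) (5 / 3) 2 (5 / 2) n = 16 / 243) ∧
    (∀ n : ℕ, gammaC (4 / 3) (5 / 3) 2 (5 / 2) n = 64 / 19683) ∧
    (∀ (n : ℕ) (x : ℝ),
      P (4 / 3) (5 / 3) 2 (5 / 2) (n + 1) x =
        (x - 4 / 9) * P (4 / 3) (5 / 3) 2 (5 / 2) n x -
          (16 / 243) * Pz (4 / 3) (5 / 3) 2 (5 / 2) ((n : ℤ) - 1) x -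
          (64 / 19683) * Pz (4 / 3) (5 / 3) 2 (5 / 2) ((n : ℤ) - 2) x) :=
  ⟨betaC_eq, alphaC_eq, gammaC_eq, P_succ⟩
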